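/- arXiv:2403.05386 — 13 statements merged into one kernel-verified Lean document; each statement's English description precedes it below -/
import Mathlib

section
/- Soundness of existential Büchi ranking functions (Theorem 1, soundness direction): Let S be a type of states with a total transition relation R (every state has at least one R-successor), a set Init ⊆ S of initial states, and a Büchi specification B ⊆ S. If there exists a B-existential Büchi ranking function f : S → ℝ, then there exists a run π : ℕ → S (i.e., π 0 ∈ Init and R (π i) (π (i+1)) for all i) such that the set {i : ℕ | π i ∈ B} is infinite. -/
/-- A run of the transition system: starts in `Init` and follows `R`. -/
def IsRun {S : Type*} (R : S → S → Prop) (Init : Set S) (π : ℕ → S) : Prop :=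
  π 0 ∈ Init ∧ ∀ i, R (π i) (π (i + 1))

/-- The pair `(s₁, s₂)` is Büchi-ranked by `f` with respect to `B`. -/
def BuchiRanked {S : Type*} (B : Set S) (f : S → ℝ) (s₁ s₂ : S) : Prop :=
  (s₁ ∈ B ∧ (f s₁ ≥ 0 → f s₂ ≥ 0)) ∨
  (s₁ ∉ B ∧ (f s₁ ≥ 0 → 0 ≤ f s₂ ∧ f s₂ ≤ f s₁ - 1))

/-- `f` is a `B`-existential Büchi ranking function. -/
def IsEBRF {S : Type*} (R : S → S → Prop) (Init B : Set S) (f : S → ℝ) : Prop :=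
  (∃ s ∈ Init, f s ≥ 0) ∧ ∀ s₁, ∃ s₂, R s₁ s₂ ∧ BuchiRanked B f s₁ s₂

/-- Soundness of existential Büchi ranking functions. -/
theorem ebrf_sound {S : Type*} (R : S → S → Prop) (Init B : Set S)
    (htotal : ∀ s, ∃ s', R s s')
    (hf : ∃ f : S → ℝ, IsEBRF R Init B f) :
    ∃ π : ℕ → S, IsRun R Init π ∧ {i : ℕ | π i ∈ B}.Infinite := by
  obtain ⟨f, ⟨s0, hs0, hfs0⟩, hstep⟩ := hf
  choose g hg hrank using hstep
  let π : ℕ → S := fun n => Nat.rec s0 (fun _ s => g s) n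
  have hπ : ∀ i, π (i + 1) = g (π i) := fun i => rfl
  have hnonneg : ∀ i, f (π i) ≥ 0 := by
    intro i
    induction i with
    | zero => exact hfs0
    | succ n ih =>
      rw [hπ]
      rcases hrank (π n) with ⟨_, h⟩ | ⟨_, h⟩
      · exact h ih
      · exact (h ih).1
  refine ⟨π, ⟨hs0, fun i => hπ i ▸ hg (π i)⟩, ?_⟩
  by_contra hfin
  rw [Set.not_infinite] at hfin
  obtain ⟨N, hN⟩ := hfin.bddAbove
  have hnotB : ∀ i, N + 1 ≤ i → π i ∉ B := by
    intro i hi hB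
    exact absurd (hN hB) (by omega)
  have hdec : ∀ k, f (π (N + 1 + k)) ≤ f (π (N + 1)) - k := by
    intro k
    induction k with
    | zero => simp
    | succ n ih =>
      have h1 : π (N + 1 + (n + 1)) = g (π (N + 1 + n)) := hπ _
      rcases hrank (π (N + 1 + n)) with ⟨hB, _⟩ | ⟨_, h⟩
      · exact absurd hB (hnotB _ (by omega))
      · have := (h (hnonneg _)).2
        rw [h1]
        push_cast
        linarith
  obtain ⟨k, hk⟩ := exists_nat_gt (f (π (N + 1)))
  have := hnonneg (N + 1 + k)
  have := hdec k
  linarith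
end

section
/- Completeness of existential Büchi ranking functions (Theorem 1, completeness direction): Let S be a type of states with a total transition relation R (every state has at least one R-successor), a set Init ⊆ S of initial states, and a Büchi specification B ⊆ S. If there exists a run π : ℕ → S (i.e., π 0 ∈ Init and R (π i) (π (i+1)) for all i) such that {i : ℕ | π i ∈ B} is infinite, then there exists a B-existential Büchi ranking function f : S → ℝ. -/
/-!
Follow a run `π` that visits `B` infinitely often. Along the run, the number of steps until the
next visit to `B` drops by one at every step taken outside `B`. Ranking a visited state by the
least such number over all its visits, and every other state by `-1`, gives an existential Büchi
ranking function: from a visited state, continue the run from a visit realising the minimum.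
-/

open Set

/-- `0` if `u` never enters `B` after time `i`. -/
noncomputable def stepsToHit {α : Type*} (u : ℕ → α) (B : Set α) (i : ℕ) : ℕ :=
  sInf {k | u (i + k) ∈ B}

theorem stepsToHit_succ_add_one_le {α : Type*} {u : ℕ → α} {B : Set α} {i : ℕ}
    (hhit : ∃ k, u (i + k) ∈ B) (hi : u i ∉ B) :
    stepsToHit u B (i + 1) + 1 ≤ stepsToHit u B i := by
  have hmem : u (i + stepsToHit u B i) ∈ B := Nat.sInf_mem hhit
  obtain ⟨k, hk⟩ : ∃ k, stepsToHit u B i = k + 1 :=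
    Nat.exists_eq_succ_of_ne_zero fun h0 => hi (by simpa [h0] using hmem)
  have hle : stepsToHit u B (i + 1) ≤ k :=
    Nat.sInf_le (show u (i + 1 + k) ∈ B by rwa [hk, ← add_assoc, add_right_comm] at hmem)
  omega

theorem exists_add_mem_of_infinite {α : Type*} {u : ℕ → α} {B : Set α}
    (hinf : {i | u i ∈ B}.Infinite) (i : ℕ) : ∃ k, u (i + k) ∈ B := by
  obtain ⟨j, hj, hij⟩ := hinf.exists_gt i
  exact ⟨j - i, by rwa [Nat.add_sub_cancel' hij.le]⟩

noncomputable def minOverVisits {S : Type*} (π : ℕ → S) (g : ℕ → ℕ) (s : S) : ℝ :=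
  open Classical in
  if s ∈ range π then ((sInf (g '' (π ⁻¹' {s})) : ℕ) : ℝ) else -1

section minOverVisits

variable {S : Type*} {π : ℕ → S} {g : ℕ → ℕ}

theorem minOverVisits_apply (i : ℕ) :
    minOverVisits π g (π i) = ((sInf (g '' (π ⁻¹' {π i})) : ℕ) : ℝ) :=
  if_pos (mem_range_self i)

theorem minOverVisits_nonneg (i : ℕ) : 0 ≤ minOverVisits π g (π i) := by
  rw [minOverVisits_apply]
  positivity

theorem minOverVisits_le (i : ℕ) : minOverVisits π g (π i) ≤ g i := by
  rw [minOverVisits_apply]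
  exact_mod_cast Nat.sInf_le (mem_image_of_mem g (rfl : π i ∈ ({π i} : Set S)))

theorem exists_minOverVisits_eq (i : ℕ) :
    ∃ j, π j = π i ∧ minOverVisits π g (π i) = g j := by
  obtain ⟨j, hj, hgj⟩ := Nat.sInf_mem (image_nonempty.2 ⟨i, rfl⟩ : (g '' (π ⁻¹' {π i})).Nonempty)
  exact ⟨j, hj, by rw [minOverVisits_apply, hgj]⟩

theorem minOverVisits_of_notMem_range {s : S} (hs : s ∉ range π) : minOverVisits π g s = -1 :=
  if_neg hs

end minOverVisits

section BuchiRanked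

variable {S : Type*} {B : Set S} {f : S → ℝ} {s₁ s₂ : S}

theorem buchiRanked_of_neg (h : f s₁ < 0) : BuchiRanked B f s₁ s₂ := by
  by_cases hB : s₁ ∈ B
  · exact Or.inl ⟨hB, fun h' => absurd h' (not_le.2 h)⟩
  · exact Or.inr ⟨hB, fun h' => absurd h' (not_le.2 h)⟩

theorem buchiRanked_of_nonneg (h₀ : 0 ≤ f s₂) (hdec : s₁ ∉ B → f s₂ ≤ f s₁ - 1) :
    BuchiRanked B f s₁ s₂ := by
  by_cases hB : s₁ ∈ B
  · exact Or.inl ⟨hB, fun _ => h₀⟩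
  · exact Or.inr ⟨hB, fun _ => ⟨h₀, hdec hB⟩⟩

end BuchiRanked

theorem isEBRF_minOverVisits {S : Type*} {R : S → S → Prop} {Init B : Set S} {π : ℕ → S}
    {g : ℕ → ℕ} (htotal : ∀ s, ∃ s', R s s') (hrun : IsRun R Init π)
    (hdec : ∀ i, π i ∉ B → g (i + 1) + 1 ≤ g i) :
    IsEBRF R Init B (minOverVisits π g) := by
  refine ⟨⟨π 0, hrun.1, minOverVisits_nonneg 0⟩, fun s₁ => ?_⟩
  by_cases hs : s₁ ∈ range π
  · obtain ⟨i, rfl⟩ := hs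
    obtain ⟨j, hj, hmin⟩ := exists_minOverVisits_eq (π := π) (g := g) i
    refine ⟨π (j + 1), hj ▸ hrun.2 j, buchiRanked_of_nonneg (minOverVisits_nonneg _) fun hB => ?_⟩
    have hg : (g (j + 1) : ℝ) + 1 ≤ g j := by exact_mod_cast hdec j (hj ▸ hB)
    linarith [minOverVisits_le (π := π) (g := g) (j + 1)]
  · obtain ⟨s₂, hs₂⟩ := htotal s₁
    refine ⟨s₂, hs₂, buchiRanked_of_neg ?_⟩
    rw [minOverVisits_of_notMem_range hs]
    norm_num

/-- Completeness of existential Büchi ranking functions. -/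
theorem ebrf_complete {S : Type*} (R : S → S → Prop) (Init B : Set S)
    (htotal : ∀ s, ∃ s', R s s')
    (hrun : ∃ π : ℕ → S, IsRun R Init π ∧ {i : ℕ | π i ∈ B}.Infinite) :
    ∃ f : S → ℝ, IsEBRF R Init B f := by
  obtain ⟨π, hπ, hinf⟩ := hrun
  exact ⟨minOverVisits π (stepsToHit π B), isEBRF_minOverVisits htotal hπ fun i =>
    stepsToHit_succ_add_one_le (exists_add_mem_of_infinite hinf i)⟩
end

section
/- Soundness and completeness of EBRFs for existential Büchi program analysis (Theorem 1): Let S be a type of states with a total transition relation R (every state has at least one R-successor), a set Init ⊆ S of initial states, and a Büchi specification B ⊆ S. Then there exists a B-existential Büchi ranking function f : S → ℝ if and only if there exists a run π : ℕ → S (i.e., π 0 ∈ Init and R (π i) (π (i+1)) for all i) such that {i : ℕ | π i ∈ B} is infinite. -/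
/-- Soundness and completeness of EBRFs for existential Büchi program analysis. -/
theorem ebrf_sound_complete {S : Type*} (R : S → S → Prop) (Init B : Set S)
    (htotal : ∀ s, ∃ s', R s s') :
    (∃ f : S → ℝ, IsEBRF R Init B f) ↔
      (∃ π : ℕ → S, IsRun R Init π ∧ {i : ℕ | π i ∈ B}.Infinite) := by
  classical
  constructor
  · rintro ⟨f, ⟨s₀, hs₀I, hs₀f⟩, hstep⟩
    choose σ hσR hσB using hstep
    set π : ℕ → S := fun n => Nat.rec s₀ (fun _ s => σ s) n with hπ
    have hπ0 : π 0 = s₀ := rfl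
    have hπs : ∀ n, π (n + 1) = σ (π n) := fun n => rfl
    have hrun : IsRun R Init π := by
      refine ⟨by rw [hπ0]; exact hs₀I, fun i => ?_⟩
      rw [hπs]; exact hσR _
    have hnn : ∀ n, f (π n) ≥ 0 := by
      intro n
      induction n with
      | zero => rw [hπ0]; exact hs₀f
      | succ k ih =>
        rw [hπs]
        rcases hσB (π k) with ⟨_, h⟩ | ⟨_, h⟩
        · exact h ih
        · exact (h ih).1
    have hdec : ∀ n, π n ∉ B → f (π (n + 1)) ≤ f (π n) - 1 := by
      intro n hn
      rcases hσB (π n) with ⟨hB, _⟩ | ⟨_, h⟩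
      · exact absurd hB hn
      · rw [hπs]; exact (h (hnn n)).2
    refine ⟨π, hrun, ?_⟩
    by_contra hfin
    rw [Set.not_infinite] at hfin
    obtain ⟨N, hN⟩ := hfin.bddAbove
    have hnB : ∀ i, N + 1 ≤ i → π i ∉ B := by
      intro i hi hBi
      have := hN hBi
      omega
    have key : ∀ k : ℕ, f (π (N + 1 + k)) ≤ f (π (N + 1)) - k := by
      intro k
      induction k with
      | zero => simp
      | succ m ih =>
        have h1 : f (π (N + 1 + m + 1)) ≤ f (π (N + 1 + m)) - 1 :=
          hdec _ (hnB _ (by omega))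
        have : N + 1 + (m + 1) = N + 1 + m + 1 := by omega
        rw [this]
        push_cast
        push_cast at ih
        linarith
    obtain ⟨k, hk⟩ := exists_nat_gt (f (π (N + 1)))
    have := key k
    have := hnn (N + 1 + k)
    linarith
  · rintro ⟨π, ⟨h0, hR⟩, hinf⟩
    set A : ℕ → Set ℕ := fun i => {j | i ≤ j ∧ π j ∈ B} with hA
    have hAne : ∀ i, (A i).Nonempty := by
      intro i
      obtain ⟨m, hm, him⟩ := hinf.exists_gt i
      exact ⟨m, le_of_lt him, hm⟩
    set N : ℕ → ℕ := fun i => sInf (A i) with hNdef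
    have hNmem : ∀ i, i ≤ N i ∧ π (N i) ∈ B := fun i => Nat.sInf_mem (hAne i)
    set g : ℕ → ℕ := fun i => N i - i with hg
    have hgB : ∀ i, π i ∈ B → g i = 0 := by
      intro i hi
      have : N i ≤ i := Nat.sInf_le ⟨le_rfl, hi⟩
      simp [hg]; omega
    have hgnB : ∀ i, π i ∉ B → 1 ≤ g i ∧ g (i + 1) = g i - 1 := by
      intro i hi
      have h1 : i + 1 ≤ N i := by
        rcases hNmem i with ⟨hle, hmem⟩
        rcases eq_or_lt_of_le hle with heq | hlt
        · exact absurd (heq ▸ hmem) hi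
        · omega
      have hNeq : N (i + 1) = N i := by
        apply le_antisymm
        · exact Nat.sInf_le ⟨h1, (hNmem i).2⟩
        · exact Nat.sInf_le ⟨le_trans (by omega) (hNmem (i+1)).1, (hNmem (i+1)).2⟩
      constructor
      · simp [hg]; omega
      · simp [hg, hNeq]; omega
    set vals : S → Set ℕ := fun s => {n | ∃ i, π i = s ∧ g i = n} with hvals
    set f : S → ℝ := fun s => if h : (vals s).Nonempty then ((sInf (vals s) : ℕ) : ℝ) else -1
      with hf
    have hfne : ∀ s, (vals s).Nonempty → f s = ((sInf (vals s) : ℕ) : ℝ) := by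
      intro s h; simp [hf, h]
    have hfleg : ∀ i, f (π i) ≤ (g i : ℝ) ∧ 0 ≤ f (π i) := by
      intro i
      have hne : (vals (π i)).Nonempty := ⟨g i, i, rfl, rfl⟩
      rw [hfne _ hne]
      constructor
      · exact_mod_cast Nat.sInf_le (show g i ∈ vals (π i) from ⟨i, rfl, rfl⟩)
      · positivity
    refine ⟨f, ⟨π 0, h0, (hfleg 0).2⟩, ?_⟩
    intro s₁
    by_cases hne : (vals s₁).Nonempty
    · obtain ⟨i, hπi, hgi⟩ := Nat.sInf_mem hne
      have hfs₁ : f s₁ = (g i : ℝ) := by rw [hfne _ hne, hgi]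
      refine ⟨π (i + 1), by rw [← hπi]; exact hR i, ?_⟩
      by_cases hB : s₁ ∈ B
      · exact Or.inl ⟨hB, fun _ => (hfleg (i + 1)).2⟩
      · refine Or.inr ⟨hB, fun _ => ⟨(hfleg (i + 1)).2, ?_⟩⟩
        have hπiB : π i ∉ B := by rw [hπi]; exact hB
        obtain ⟨h1, h2⟩ := hgnB i hπiB
        have := (hfleg (i + 1)).1
        rw [hfs₁]
        rw [h2] at this
        have hc : ((g i - 1 : ℕ) : ℝ) = (g i : ℝ) - 1 := by
          push_cast [h1]; ring
        linarith [hc ▸ this]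
    · obtain ⟨s₂, hs₂⟩ := htotal s₁
      have hneg : f s₁ = -1 := by simp [hf, hne]
      by_cases hB : s₁ ∈ B
      · exact ⟨s₂, hs₂, Or.inl ⟨hB, fun h => absurd h (by rw [hneg]; norm_num)⟩⟩
      · exact ⟨s₂, hs₂, Or.inr ⟨hB, fun h => absurd h (by rw [hneg]; norm_num)⟩⟩
end

section
/- Core ranking lemma: Let S be a type of states, B ⊆ S a Büchi specification, f : S → ℝ, and π : ℕ → S a sequence such that f (π 0) ≥ 0 and, for every i : ℕ, the pair (π i, π (i+1)) is Büchi-ranked by f, namely: if π i ∈ B then (f (π i) ≥ 0 → f (π (i+1)) ≥ 0), and if π i ∉ B then (f (π i) ≥ 0 → (0 ≤ f (π (i+1)) ∧ f (π (i+1)) ≤ f (π i) - 1)). Then the set {i : ℕ | π i ∈ B} is infinite. -/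
/-- Core ranking lemma: a sequence Büchi-ranked by `f` along all its steps,
starting with non-negative `f`-value, visits `B` infinitely often. -/
theorem core_ranking_lemma {S : Type*} (B : Set S) (f : S → ℝ) (π : ℕ → S)
    (h0 : f (π 0) ≥ 0)
    (hrank : ∀ i : ℕ,
      (π i ∈ B → (f (π i) ≥ 0 → f (π (i + 1)) ≥ 0)) ∧
      (π i ∉ B → (f (π i) ≥ 0 → 0 ≤ f (π (i + 1)) ∧ f (π (i + 1)) ≤ f (π i) - 1))) :
    {i : ℕ | π i ∈ B}.Infinite := by
  have hpos : ∀ i, f (π i) ≥ 0 := by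
    intro i
    induction i with
    | zero => exact h0
    | succ n ih =>
      by_cases hb : π n ∈ B
      · exact (hrank n).1 hb ih
      · exact ((hrank n).2 hb ih).1
  by_contra h
  have hfin : {i | π i ∈ B}.Finite := Set.not_infinite.mp h
  obtain ⟨N, hN⟩ : ∃ N, ∀ i ≥ N, π i ∉ B := by
    rcases hfin.bddAbove with ⟨N, hN⟩
    exact ⟨N + 1, fun i hi hmem => by
      have := hN hmem; omega⟩
  have key : ∀ k : ℕ, f (π (N + k)) ≤ f (π N) - k := by
    intro k
    induction k with
    | zero => simp
    | succ n ih =>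
      have h := ((hrank (N + n)).2 (hN _ (Nat.le_add_right _ _)) (hpos _)).2
      push_cast
      have : (N + (n+1)) = (N + n) + 1 := by ring
      rw [this]
      push_cast at ih
      linarith
  obtain ⟨k, hk⟩ := exists_nat_gt (f (π N))
  have := key k
  have := hpos (N + k)
  linarith
end

section
/- EBRF construction from a memoryless B-Büchi scheduler: Let S be a type of states with a transition relation R, a set Init ⊆ S of initial states, and a Büchi specification B ⊆ S. Let σ : S → S satisfy R s (σ s) for all s, let s₀ ∈ Init, and let π : ℕ → S be the orbit π n = σ^[n] s₀. Assume {n : ℕ | π n ∈ B} is infinite. Define f : S → ℝ by f s = (the least k : ℕ such that σ^[k] s ∈ B) if s lies in the range of π, and f s = -1 otherwise. (For s in the range of π such a least k exists because the orbit visits B infinitely often.) Then f is a B-existential Büchi ranking function. -/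
/-- EBRF construction from a memoryless `B`-Büchi scheduler: the function
assigning to each state on the orbit its distance to the next visit of `B`
(the least `k` with `σ^[k] s ∈ B`), and `-1` to states off the orbit,
is a `B`-existential Büchi ranking function. -/
theorem ebrf_from_memoryless_scheduler {S : Type*} (R : S → S → Prop)
    (Init B : Set S) (σ : S → S) (hσ : ∀ s, R s (σ s))
    (s₀ : S) (hs₀ : s₀ ∈ Init)
    (hinf : {n : ℕ | σ^[n] s₀ ∈ B}.Infinite)
    (f : S → ℝ)
    (hf_on : ∀ s ∈ Set.range (fun n : ℕ => σ^[n] s₀),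
      f s = ((sInf {k : ℕ | σ^[k] s ∈ B} : ℕ) : ℝ))
    (hf_off : ∀ s ∉ Set.range (fun n : ℕ => σ^[n] s₀), f s = -1) :
    IsEBRF R Init B f := by
  -- nonemptiness of the "distance to B" set for any orbit point
  have hne : ∀ n : ℕ, {k : ℕ | σ^[k] (σ^[n] s₀) ∈ B}.Nonempty := by
    intro n
    obtain ⟨m, hm, hnm⟩ := hinf.exists_gt n
    refine ⟨m - n, ?_⟩
    have : σ^[m - n] (σ^[n] s₀) = σ^[m] s₀ := by
      rw [← Function.iterate_add_apply, Nat.sub_add_cancel hnm.le]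
    simpa [this] using hm
  constructor
  · refine ⟨s₀, hs₀, ?_⟩
    have h0 : s₀ ∈ Set.range (fun n : ℕ => σ^[n] s₀) := ⟨0, rfl⟩
    rw [hf_on s₀ h0]
    positivity
  · intro s₁
    refine ⟨σ s₁, hσ s₁, ?_⟩
    by_cases hr : s₁ ∈ Set.range (fun n : ℕ => σ^[n] s₀)
    · obtain ⟨n, rfl⟩ := hr
      have hr2 : σ (σ^[n] s₀) ∈ Set.range (fun n : ℕ => σ^[n] s₀) := by
        exact ⟨n + 1, (Function.iterate_succ_apply' σ n s₀)⟩
      by_cases hB : σ^[n] s₀ ∈ B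
      · left
        refine ⟨hB, fun _ => ?_⟩
        rw [hf_on _ hr2]
        positivity
      · right
        refine ⟨hB, fun _ => ?_⟩
        set N := sInf {k : ℕ | σ^[k] (σ^[n] s₀) ∈ B} with hN
        have hNmem : σ^[N] (σ^[n] s₀) ∈ B := Nat.sInf_mem (hne n)
        have hNpos : 0 < N := by
          rcases Nat.eq_zero_or_pos N with h | h
          · exact absurd (by simpa [h] using hNmem) hB
          · exact h
        have key : ∀ k : ℕ, σ^[k] (σ (σ^[n] s₀)) = σ^[k + 1] (σ^[n] s₀) := by
          intro k
          rw [Function.iterate_succ_apply]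
        have hset : {k : ℕ | σ^[k] (σ (σ^[n] s₀)) ∈ B}
            = {k : ℕ | σ^[k + 1] (σ^[n] s₀) ∈ B} := by
          ext k
          simp only [Set.mem_setOf_eq, key k]
        have hInf' : sInf {k : ℕ | σ^[k] (σ (σ^[n] s₀)) ∈ B} = N - 1 := by
          rw [hset]
          apply le_antisymm
          · apply Nat.sInf_le
            show σ^[(N - 1) + 1] (σ^[n] s₀) ∈ B
            rwa [Nat.sub_add_cancel hNpos]
          · apply le_csInf
            · exact ⟨N - 1, show σ^[(N-1)+1] (σ^[n] s₀) ∈ B by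
                rwa [Nat.sub_add_cancel hNpos]⟩
            · intro k hk
              have : N ≤ k + 1 := Nat.sInf_le hk
              omega
        rw [hf_on _ hr2, hf_on _ ⟨n, rfl⟩, hInf', ← hN]
        constructor
        · positivity
        · rw [Nat.cast_sub hNpos, Nat.cast_one]
    · have h1 : f s₁ = -1 := hf_off s₁ hr
      by_cases hB : s₁ ∈ B
      · exact Or.inl ⟨hB, fun h => absurd h (by rw [h1]; norm_num)⟩
      · exact Or.inr ⟨hB, fun h => absurd h (by rw [h1]; norm_num)⟩
end

section
/- Soundness of universal Büchi ranking functions (Theorem 2, soundness direction): Let S be a type of states with a transition relation R, a set Init ⊆ S of initial states, and a Büchi specification B ⊆ S. If there exists a B-universal Büchi ranking function f : S → ℝ, then every run π : ℕ → S (i.e., π 0 ∈ Init and R (π i) (π (i+1)) for all i) satisfies that {i : ℕ | π i ∈ B} is infinite. -/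
/-- `f` is a `B`-universal Büchi ranking function. -/
def IsUBRF {S : Type*} (R : S → S → Prop) (Init B : Set S) (f : S → ℝ) : Prop :=
  (∀ s ∈ Init, f s ≥ 0) ∧ ∀ s₁ s₂, R s₁ s₂ → BuchiRanked B f s₁ s₂

/-- Soundness of universal Büchi ranking functions. -/
theorem ubrf_sound {S : Type*} (R : S → S → Prop) (Init B : Set S)
    (hf : ∃ f : S → ℝ, IsUBRF R Init B f) :
    ∀ π : ℕ → S, IsRun R Init π → {i : ℕ | π i ∈ B}.Infinite := by
  obtain ⟨f, hinit, hrank⟩ := hf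
  intro π ⟨h0, hstep⟩
  -- f is nonneg along the run
  have hnn : ∀ i, f (π i) ≥ 0 := by
    intro i
    induction i with
    | zero => exact hinit _ h0
    | succ n ih =>
      rcases hrank _ _ (hstep n) with ⟨_, h⟩ | ⟨_, h⟩
      · exact h ih
      · exact (h ih).1
  -- suppose finite
  by_contra hfin
  rw [Set.not_infinite] at hfin
  obtain ⟨N, hN⟩ := hfin.bddAbove
  -- for i > N, π i ∉ B
  have hnB : ∀ i, N < i → π i ∉ B := by
    intro i hi hB
    exact absurd (hN hB) (not_le.mpr hi)
  -- f decreases by 1 each step after N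
  have hdec : ∀ k, f (π (N + 1 + k)) ≤ f (π (N + 1)) - k := by
    intro k
    induction k with
    | zero => simp
    | succ n ih =>
      have hstep' := hrank _ _ (hstep (N + 1 + n))
      rcases hstep' with ⟨hB, _⟩ | ⟨_, h⟩
      · exact absurd hB (hnB _ (by omega))
      · have := (h (hnn _)).2
        have heq : N + 1 + (n + 1) = (N + 1 + n) + 1 := by omega
        rw [heq]
        push_cast
        linarith
  obtain ⟨k, hk⟩ := exists_nat_gt (f (π (N + 1)))
  have := hnn (N + 1 + k)
  have := hdec k
  linarith
end

section
/- Completeness of universal Büchi ranking functions (Theorem 2, completeness direction): Let S be a type of states with a total transition relation R (every state has at least one R-successor) that is finitely branching (for every s, the set {s' | R s s'} is finite), a set Init ⊆ S of initial states, and a Büchi specification B ⊆ S. If every run π : ℕ → S (i.e., π 0 ∈ Init and R (π i) (π (i+1)) for all i) satisfies that {i : ℕ | π i ∈ B} is infinite, then there exists a B-universal Büchi ranking function f : S → ℝ. -/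
/-- `Hit R B n s`: along every `R`-path from `s`, `B` is reached within `n` steps. -/
def Hit {S : Type*} (R : S → S → Prop) (B : Set S) : ℕ → S → Prop
  | 0, s => s ∈ B
  | n + 1, s => s ∈ B ∨ ∀ y, R s y → Hit R B n y

lemma Hit_succ {S : Type*} {R : S → S → Prop} {B : Set S} :
    ∀ {n : ℕ} {s : S}, Hit R B n s → Hit R B (n + 1) s := by
  intro n
  induction n with
  | zero => intro s h; exact Or.inl h
  | succ k ih =>
    intro s h
    rcases h with h | h
    · exact Or.inl h
    · exact Or.inr fun y hy => ih (h y hy)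

lemma Hit_mono {S : Type*} {R : S → S → Prop} {B : Set S} {m n : ℕ}
    (hmn : m ≤ n) {s : S} (h : Hit R B m s) : Hit R B n s := by
  induction hmn with
  | refl => exact h
  | step _ ih => exact Hit_succ ih

/-- Completeness of universal Büchi ranking functions, for total and
finitely branching transition relations. -/
theorem ubrf_complete {S : Type*} (R : S → S → Prop) (Init B : Set S)
    (htotal : ∀ s, ∃ s', R s s')
    (hfin : ∀ s, {s' | R s s'}.Finite)
    (hall : ∀ π : ℕ → S, IsRun R Init π → {i : ℕ | π i ∈ B}.Infinite) :
    ∃ f : S → ℝ, IsUBRF R Init B f := by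
  classical
  set r : S → S → Prop := fun y x => x ∉ B ∧ R x y with hr
  set Reach : S → Prop := fun s => ∃ s₀ ∈ Init, Relation.ReflTransGen R s₀ s with hReach
  -- Every path from a reachable state visits B infinitely often.
  have pathB : ∀ s₀ ∈ Init, ∀ s, Relation.ReflTransGen R s₀ s →
      ∀ σ : ℕ → S, σ 0 = s → (∀ i, R (σ i) (σ (i + 1))) → {i | σ i ∈ B}.Infinite := by
    intro s₀ hs₀ s hrt
    induction hrt with
    | refl => intro σ h0 hstep; exact hall σ ⟨h0 ▸ hs₀, hstep⟩
    | @tail b c _ hbc ih =>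
      intro σ h0 hstep
      set σ' : ℕ → S := fun i => match i with | 0 => b | j + 1 => σ j with hσ'
      have h' : {i | σ' i ∈ B}.Infinite := by
        refine ih σ' rfl ?_
        intro i
        cases i with
        | zero => simpa [hσ', h0] using hbc
        | succ j => exact hstep j
      have hsub : {i | σ' i ∈ B} ⊆ insert 0 (Nat.succ '' {i | σ i ∈ B}) := by
        intro i hi
        cases i with
        | zero => exact Set.mem_insert _ _
        | succ j => exact Set.mem_insert_of_mem _ ⟨j, hi, rfl⟩
      by_contra hfin'
      rw [Set.not_infinite] at hfin'
      exact (h'.mono hsub) ((hfin'.image _).insert 0)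
  -- Reachable states are accessible for r.
  have accOf : ∀ s : S,
      (∀ σ : ℕ → S, σ 0 = s → (∀ i, R (σ i) (σ (i + 1))) → ∃ i, σ i ∈ B) →
      Acc r s := by
    intro s hs
    by_contra hacc
    have step : ∀ x : S, ¬ Acc r x → ∃ y, r y x ∧ ¬ Acc r y := by
      intro x hx
      by_contra h
      push_neg at h
      exact hx (Acc.intro x fun y hy => h y hy)
    have step' : ∀ x : {x : S // ¬ Acc r x}, ∃ y : {x : S // ¬ Acc r x},
        x.1 ∉ B ∧ R x.1 y.1 := by
      intro x
      obtain ⟨y, hy, hy2⟩ := step x.1 x.2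
      exact ⟨⟨y, hy2⟩, hy⟩
    choose g hg using step'
    set σ : ℕ → {x : S // ¬ Acc r x} := fun i => g^[i] ⟨s, hacc⟩ with hσ
    have hstep : ∀ i, (σ i).1 ∉ B ∧ R (σ i).1 (σ (i + 1)).1 := by
      intro i
      have : σ (i + 1) = g (σ i) := by
        simp [hσ, Function.iterate_succ_apply']
      rw [this]
      exact hg (σ i)
    obtain ⟨i, hi⟩ := hs (fun i => (σ i).1) (by simp [hσ]) (fun i => (hstep i).2)
    exact (hstep i).1 hi
  -- Accessible states have a finite hitting bound.
  have hitOf : ∀ s : S, Acc r s → ∃ n, Hit R B n s := by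
    intro s h
    induction h with
    | intro x hx ih =>
      by_cases hxB : x ∈ B
      · exact ⟨0, hxB⟩
      · set nf : S → ℕ := fun y => if h : ∃ n, Hit R B n y then Nat.find h else 0 with hnf
        refine ⟨(hfin x).toFinset.sup nf + 1, Or.inr fun y hy => ?_⟩
        have hyH : ∃ n, Hit R B n y := ih y ⟨hxB, hy⟩
        have h1 : Hit R B (nf y) y := by
          simp only [hnf, dif_pos hyH]
          exact Nat.find_spec hyH
        have h2 : nf y ≤ (hfin x).toFinset.sup nf :=
          Finset.le_sup ((hfin x).mem_toFinset.mpr hy)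
        exact Hit_mono h2 h1
  have key : ∀ s : S, Reach s → ∃ n, Hit R B n s := by
    intro s hs
    obtain ⟨s₀, hs₀, hrt⟩ := hs
    exact hitOf s (accOf s fun σ h0 hstep => (pathB s₀ hs₀ s hrt σ h0 hstep).nonempty)
  refine ⟨fun s => if h : Reach s then ((Nat.find (key s h) : ℕ) : ℝ) else -1, ?_, ?_⟩
  · intro s hs
    have hR : Reach s := ⟨s, hs, Relation.ReflTransGen.refl⟩
    simp only [dif_pos hR]
    positivity
  · intro s₁ s₂ hR12
    by_cases h1 : Reach s₁
    · have h2 : Reach s₂ := by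
        obtain ⟨s₀, hs₀, hrt⟩ := h1
        exact ⟨s₀, hs₀, hrt.tail hR12⟩
      by_cases hB : s₁ ∈ B
      · refine Or.inl ⟨hB, fun _ => ?_⟩
        simp only [dif_pos h2]
        positivity
      · refine Or.inr ⟨hB, fun _ => ?_⟩
        simp only [dif_pos h1, dif_pos h2]
        have hspec := Nat.find_spec (key s₁ h1)
        cases hn : Nat.find (key s₁ h1) with
        | zero => rw [hn] at hspec; exact absurd hspec hB
        | succ m =>
          rw [hn] at hspec
          rcases hspec with h | h
          · exact absurd h hB
          · have hm : Hit R B m s₂ := h s₂ hR12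
            have hle : Nat.find (key s₂ h2) ≤ m := Nat.find_min' _ hm
            constructor
            · positivity
            · push_cast
              have : ((Nat.find (key s₂ h2) : ℝ)) ≤ m := by exact_mod_cast hle
              linarith
    · by_cases hB : s₁ ∈ B
      · refine Or.inl ⟨hB, fun hge => ?_⟩
        simp only [dif_neg h1] at hge
        linarith
      · refine Or.inr ⟨hB, fun hge => ?_⟩
        simp only [dif_neg h1] at hge
        linarith
end

section
/- Soundness and completeness of UBRFs for universal Büchi program analysis (Theorem 2): Let S be a type of states with a total transition relation R (every state has at least one R-successor) that is finitely branching (for every s, the set {s' | R s s'} is finite), a set Init ⊆ S of initial states, and a Büchi specification B ⊆ S. Then there exists a B-universal Büchi ranking function f : S → ℝ if and only if every run π : ℕ → S (i.e., π 0 ∈ Init and R (π i) (π (i+1)) for all i) satisfies that {i : ℕ | π i ∈ B} is infinite. -/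
section Aux

variable {S : Type*} (R : S → S → Prop) (B : Set S)

/-- There is a `B`-free `R`-path of length `n` starting at `s`. -/
def BFree (s : S) (n : ℕ) : Prop :=
  ∃ p : ℕ → S, p 0 = s ∧ (∀ i < n, R (p i) (p (i + 1))) ∧ (∀ i ≤ n, p i ∉ B)

def Unb (s : S) : Prop := ∀ n, BFree R B s n

variable {R B}

theorem bfree_mono {s : S} {m n : ℕ} (hmn : m ≤ n) (h : BFree R B s n) : BFree R B s m := by
  obtain ⟨p, h0, hR, hB⟩ := h
  exact ⟨p, h0, fun i hi => hR i (lt_of_lt_of_le hi hmn), fun i hi => hB i (le_trans hi hmn)⟩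

theorem bfree_tail {s : S} {n : ℕ} (h : BFree R B s (n + 1)) :
    ∃ s', R s s' ∧ BFree R B s' n := by
  obtain ⟨p, h0, hR, hB⟩ := h
  refine ⟨p 1, h0 ▸ hR 0 (Nat.succ_pos n), ⟨fun i => p (i + 1), rfl, ?_, ?_⟩⟩
  · exact fun i hi => hR (i + 1) (by omega)
  · exact fun i hi => hB (i + 1) (by omega)

theorem bfree_cons {s s' : S} {n : ℕ} (hsB : s ∉ B) (hR : R s s') (h : BFree R B s' n) :
    BFree R B s (n + 1) := by
  obtain ⟨p, h0, hpR, hpB⟩ := h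
  refine ⟨fun i => if i = 0 then s else p (i - 1), by simp, ?_, ?_⟩
  · intro i hi
    rcases Nat.eq_zero_or_pos i with rfl | hpos
    · simpa [h0] using hR
    · have h1 : i ≠ 0 := Nat.pos_iff_ne_zero.mp hpos
      have h2 : i + 1 ≠ 0 := by omega
      simp only [h1, h2, if_false]
      have : i + 1 - 1 = (i - 1) + 1 := by omega
      rw [this]
      exact hpR (i - 1) (by omega)
  · intro i hi
    rcases Nat.eq_zero_or_pos i with rfl | hpos
    · simpa using hsB
    · have h1 : i ≠ 0 := Nat.pos_iff_ne_zero.mp hpos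
      simp only [h1, if_false]
      exact hpB (i - 1) (by omega)

theorem bfree_zero {s : S} (hs : s ∉ B) : BFree R B s 0 :=
  ⟨fun _ => s, rfl, fun i hi => absurd hi (by omega), fun i _ => hs⟩

theorem unb_notB {s : S} (h : Unb R B s) : s ∉ B := by
  obtain ⟨p, h0, -, hB⟩ := h 0
  exact h0 ▸ hB 0 le_rfl

theorem unb_step (hfin : ∀ s, {s' | R s s'}.Finite) {s : S} (h : Unb R B s) :
    ∃ s', R s s' ∧ Unb R B s' := by
  by_contra hcon
  push_neg at hcon
  have hb : ∀ s' ∈ {s' | R s s'}, ∃ n, ¬ BFree R B s' n := by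
    intro s' hs'
    obtain ⟨n, hn⟩ := not_forall.mp (hcon s' hs')
    exact ⟨n, hn⟩
  classical
  let F : S → ℕ := fun s' => if h : ∃ n, ¬ BFree R B s' n then Nat.find h else 0
  obtain ⟨N, hN⟩ := (((hfin s).image F).bddAbove)
  obtain ⟨s', hRs', hBF⟩ := bfree_tail (h (N + 1))
  have hex : ∃ n, ¬ BFree R B s' n := hb s' hRs'
  have h1 : ¬ BFree R B s' (Nat.find hex) := Nat.find_spec hex
  have h2 : F s' ≤ N := hN (Set.mem_image_of_mem F hRs')
  have h3 : F s' = Nat.find hex := by simp [F, hex]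
  exact h1 (bfree_mono (h3 ▸ h2) hBF)

/-- An infinite `B`-free chain starting from an unbounded state. -/
noncomputable def unbChain (hfin : ∀ s, {s' | R s s'}.Finite) (s : S) (hs : Unb R B s) :
    ℕ → {t : S // Unb R B t}
  | 0 => ⟨s, hs⟩
  | n + 1 =>
    let prev := unbChain hfin s hs n
    ⟨(unb_step hfin prev.2).choose, (unb_step hfin prev.2).choose_spec.2⟩

theorem unbChain_step (hfin : ∀ s, {s' | R s s'}.Finite) (s : S) (hs : Unb R B s) (n : ℕ) :
    R (unbChain hfin s hs n).1 (unbChain hfin s hs (n + 1)).1 :=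
  (unb_step hfin (unbChain hfin s hs n).2).choose_spec.1

variable (R) in
/-- `s` is reachable from `Init` by a finite `R`-path. -/
def FReach (Init : Set S) (s : S) : Prop :=
  ∃ p : ℕ → S, ∃ n, p 0 ∈ Init ∧ (∀ i < n, R (p i) (p (i + 1))) ∧ p n = s

theorem freach_init {Init : Set S} {s : S} (hs : s ∈ Init) : FReach R Init s :=
  ⟨fun _ => s, 0, hs, fun i hi => absurd hi (by omega), rfl⟩

theorem freach_step {Init : Set S} {s s' : S} (hs : FReach R Init s) (hR : R s s') :
    FReach R Init s' := by
  obtain ⟨p, n, hp0, hpR, hpn⟩ := hs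
  refine ⟨fun i => if i = n + 1 then s' else p i, n + 1, by simp [hp0], ?_, by simp⟩
  · intro i hi
    have h1 : i ≠ n + 1 := by omega
    simp only [h1, if_false]
    by_cases h2 : i = n
    · subst h2; simpa [hpn] using hR
    · have : i + 1 ≠ n + 1 := by omega
      simp only [this, if_false]
      exact hpR i (by omega)

/-- If every run visits `B` infinitely often, then no reachable state admits
arbitrarily long `B`-free paths. -/
theorem freach_not_unb {Init : Set S} (hfin : ∀ s, {s' | R s s'}.Finite)
    (hyp : ∀ π : ℕ → S, IsRun R Init π → {i : ℕ | π i ∈ B}.Infinite)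
    {s : S} (hs : FReach R Init s) : ∃ n, ¬ BFree R B s n := by
  by_contra h
  push_neg at h
  have hu : Unb R B s := h
  obtain ⟨p, m, hp0, hpR, hpm⟩ := hs
  let c := unbChain hfin s hu
  set π : ℕ → S := fun i => if i ≤ m then p i else (c (i - m)).1 with hπdef
  have hc0 : (c 0).1 = s := rfl
  have hπ : IsRun R Init π := by
    constructor
    · simpa [hπdef] using hp0
    · intro i
      by_cases h1 : i + 1 ≤ m
      · have h2 : i ≤ m := by omega
        simpa [hπdef, h1, h2] using hpR i (by omega)
      · by_cases h2 : i ≤ m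
        · have h3 : i = m := by omega
          have h4 : i + 1 - m = 1 := by omega
          have hpi : p i = s := by rw [h3, hpm]
          have := unbChain_step hfin s hu 0
          rw [hc0] at this
          simpa [hπdef, h1, h2, h4, hpi] using this
        · have h3 : i + 1 - m = (i - m) + 1 := by omega
          simpa [hπdef, h1, h2, h3] using unbChain_step hfin s hu (i - m)
  refine hyp π hπ (Set.Finite.subset (Set.finite_Iic m) ?_)
  intro i hi
  by_contra hgt
  simp only [Set.mem_Iic, not_le] at hgt
  have h1 : ¬ i ≤ m := by omega
  have : π i = (c (i - m)).1 := by simp [hπdef, h1]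
  exact unb_notB (c (i - m)).2 (this ▸ hi)

end Aux

/-- Soundness and completeness of UBRFs for universal Büchi program analysis. -/
theorem ubrf_sound_complete {S : Type*} (R : S → S → Prop) (Init B : Set S)
    (htotal : ∀ s, ∃ s', R s s')
    (hfin : ∀ s, {s' | R s s'}.Finite) :
    (∃ f : S → ℝ, IsUBRF R Init B f) ↔
      (∀ π : ℕ → S, IsRun R Init π → {i : ℕ | π i ∈ B}.Infinite) := by
  constructor
  · -- Soundness
    rintro ⟨f, hInit, hrank⟩ π hrun
    by_contra hfinB
    rw [Set.not_infinite] at hfinB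
    obtain ⟨N, hN⟩ := hfinB.bddAbove
    have hnB : ∀ i, N < i → π i ∉ B := fun i hi hmem => absurd (hN hmem) (by omega)
    have hpos : ∀ i, f (π i) ≥ 0 := by
      intro i
      induction i with
      | zero => exact hInit _ hrun.1
      | succ n ih =>
        rcases hrank _ _ (hrun.2 n) with ⟨-, h⟩ | ⟨-, h⟩
        · exact h ih
        · exact (h ih).1
    have hdec : ∀ k : ℕ, f (π (N + 1 + k)) ≤ f (π (N + 1)) - k := by
      intro k
      induction k with
      | zero => simp
      | succ n ih =>
        rcases hrank _ _ (hrun.2 (N + 1 + n)) with ⟨hmem, -⟩ | ⟨-, h⟩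
        · exact absurd hmem (hnB _ (by omega))
        · have := (h (hpos _)).2
          have harr : N + 1 + (n + 1) = (N + 1 + n) + 1 := by omega
          rw [harr]
          push_cast
          linarith
    obtain ⟨k, hk⟩ := exists_nat_gt (f (π (N + 1)))
    have h1 := hdec k
    have h2 := hpos (N + 1 + k)
    linarith
  · -- Completeness
    intro hyp
    classical
    let g : S → ℕ := fun s => if h : ∃ n, ¬ BFree R B s n then Nat.find h else 0
    refine ⟨fun s => if FReach R Init s then (g s : ℝ) else -1, ?_, ?_⟩
    · intro s hs
      simp [freach_init hs]
    · intro s₁ s₂ hR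
      by_cases hr1 : FReach R Init s₁
      · have hr2 : FReach R Init s₂ := freach_step hr1 hR
        by_cases hB1 : s₁ ∈ B
        · exact Or.inl ⟨hB1, fun _ => by simp [hr2]⟩
        · refine Or.inr ⟨hB1, fun _ => ?_⟩
          simp only [hr1, hr2, if_pos]
          have he1 : ∃ n, ¬ BFree R B s₁ n := freach_not_unb hfin hyp hr1
          have he2 : ∃ n, ¬ BFree R B s₂ n := freach_not_unb hfin hyp hr2
          have hg1 : g s₁ = Nat.find he1 := by simp [g, he1]
          have hg2 : g s₂ = Nat.find he2 := by simp [g, he2]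
          have key : Nat.find he2 + 1 ≤ Nat.find he1 := by
            rw [Nat.le_find_iff]
            intro m hm
            rw [not_not]
            match m with
            | 0 => exact bfree_zero hB1
            | k + 1 =>
              have hk : k < Nat.find he2 := by omega
              exact bfree_cons hB1 hR (not_not.mp (Nat.find_min he2 hk))
          constructor
          · positivity
          · rw [hg1, hg2]
            have : ((Nat.find he2 : ℝ) + 1) ≤ (Nat.find he1 : ℝ) := by exact_mod_cast key
            linarith
      · by_cases hB1 : s₁ ∈ B
        · exact Or.inl ⟨hB1, fun h => absurd h (by simp [hr1])⟩
        · exact Or.inr ⟨hB1, fun h => absurd h (by simp [hr1])⟩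
end

section
/- Uniform bound on the distance to B (well-definedness of the function d in the proof of Theorem 2): Let S be a type of states with a total transition relation R (every state has at least one R-successor) that is finitely branching (for every s, the set {s' | R s s'} is finite), a set Init ⊆ S of initial states, and a Büchi specification B ⊆ S. Assume every run π : ℕ → S (π 0 ∈ Init, R (π i) (π (i+1)) for all i) satisfies that {i : ℕ | π i ∈ B} is infinite. Then for every state s that is reachable (there exist s' ∈ Init, a function τ : ℕ → S and m : ℕ with τ 0 = s', R (τ i) (τ (i+1)) for all i < m, and τ m = s), there exists n : ℕ such that every sequence t : ℕ → S with t 0 = s and R (t i) (t (i+1)) for all i < n satisfies t k ∈ B for some k ≤ n. -/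
/-- `s` is reachable: there is a finite `R`-path from some initial state to `s`. -/
def Reachable {S : Type*} (R : S → S → Prop) (Init : Set S) (s : S) : Prop :=
  ∃ s' ∈ Init, ∃ τ : ℕ → S, ∃ m : ℕ,
    τ 0 = s' ∧ (∀ i < m, R (τ i) (τ (i + 1))) ∧ τ m = s

/-- There is a `B`-avoiding path of length `n` from `s`. -/
def Bad {S : Type*} (R : S → S → Prop) (B : Set S) (s : S) (n : ℕ) : Prop :=
  ∃ t : ℕ → S, t 0 = s ∧ (∀ i < n, R (t i) (t (i + 1))) ∧ ∀ k ≤ n, t k ∉ B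

lemma bad_mono {S : Type*} {R : S → S → Prop} {B : Set S} {s : S} {m n : ℕ}
    (hmn : m ≤ n) (h : Bad R B s n) : Bad R B s m := by
  obtain ⟨t, h0, hstep, havoid⟩ := h
  exact ⟨t, h0, fun i hi => hstep i (lt_of_lt_of_le hi hmn),
    fun k hk => havoid k (le_trans hk hmn)⟩

lemma bad_step {S : Type*} {R : S → S → Prop} {B : Set S}
    (hfin : ∀ s : S, {s' | R s s'}.Finite) {s : S}
    (h : ∀ n, Bad R B s n) : s ∉ B ∧ ∃ s', R s s' ∧ ∀ n, Bad R B s' n := by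
  have hsB : s ∉ B := by
    obtain ⟨t, h0, _, havoid⟩ := h 0
    simpa [h0] using havoid 0 le_rfl
  refine ⟨hsB, ?_⟩
  -- for each n pick a successor with a bad path of length n
  have hsucc : ∀ n, ∃ s' : {s' // R s s'}, Bad R B s'.1 n := by
    intro n
    obtain ⟨t, h0, hstep, havoid⟩ := h (n + 1)
    refine ⟨⟨t 1, by rw [← h0]; exact hstep 0 (Nat.succ_pos n)⟩,
      fun i => t (i + 1), rfl, fun i hi => hstep (i + 1) (by omega),
      fun k hk => havoid (k + 1) (by omega)⟩
  choose g hg using hsucc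
  haveI : Finite {s' // R s s'} := (hfin s).to_subtype
  obtain ⟨y, hy⟩ := Finite.exists_infinite_fiber g
  have hy' : (g ⁻¹' {y}).Infinite := Set.infinite_coe_iff.mp hy
  refine ⟨y.1, y.2, fun n => ?_⟩
  obtain ⟨m, hm, hnm⟩ := hy'.exists_gt n
  have hgm : g m = y := hm
  have := hg m
  rw [hgm] at this
  exact bad_mono (le_of_lt hnm) this

/-- Uniform bound on the distance to `B`: in a total, finitely branching system
in which every run is `B`-Büchi, from every reachable state there is a bound `n`
such that every `R`-path of length `n` from that state visits `B`. -/
theorem uniform_distance_bound {S : Type*} (R : S → S → Prop) (Init B : Set S)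
    (htotal : ∀ s, ∃ s', R s s')
    (hfin : ∀ s, {s' | R s s'}.Finite)
    (hall : ∀ π : ℕ → S, IsRun R Init π → {i : ℕ | π i ∈ B}.Infinite) :
    ∀ s, Reachable R Init s →
      ∃ n : ℕ, ∀ t : ℕ → S, t 0 = s → (∀ i < n, R (t i) (t (i + 1))) →
        ∃ k ≤ n, t k ∈ B := by
  intro s hreach
  by_contra hcon
  push_neg at hcon
  -- From the negation, every length has a bad path from s.
  have hbad : ∀ n, Bad R B s n := by
    intro n
    obtain ⟨t, h0, hstep, havoid⟩ := hcon n
    exact ⟨t, h0, hstep, havoid⟩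
  classical
  -- Build an infinite B-avoiding path from s.
  let F : ℕ → {x : S // ∀ n, Bad R B x n} := fun k =>
    Nat.rec (⟨s, hbad⟩ : {x : S // ∀ n, Bad R B x n})
      (fun _ p => ⟨Classical.choose ((bad_step hfin p.2).2),
        (Classical.choose_spec ((bad_step hfin p.2).2)).2⟩) k
  have hF0 : (F 0).1 = s := rfl
  have hFstep : ∀ k, R (F k).1 (F (k + 1)).1 := fun k =>
    (Classical.choose_spec ((bad_step hfin (F k).2).2)).1
  have hFavoid : ∀ k, (F k).1 ∉ B := fun k => (bad_step hfin (F k).2).1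
  obtain ⟨s₀, hs₀, τ, m, hτ0, hτstep, hτm⟩ := hreach
  set π : ℕ → S := fun i => if i < m then τ i else (F (i - m)).1 with hπ
  have hπge : ∀ i, m ≤ i → π i = (F (i - m)).1 := by
    intro i hi; simp [hπ, Nat.not_lt.mpr hi]
  have hrun : IsRun R Init π := by
    constructor
    · rcases Nat.eq_zero_or_pos m with hm | hm
      · have e : π 0 = s := by
          rw [hπge 0 (by omega)]; simp [hm, hF0]
        rw [e, ← hτm, hm, hτ0]; exact hs₀
      · have e : π 0 = τ 0 := if_pos hm
        rw [e, hτ0]; exact hs₀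
    · intro i
      rcases lt_trichotomy (i + 1) m with h1 | h1 | h1
      · have hlt : i < m := by omega
        have e1 : π i = τ i := if_pos hlt
        have h2 : π (i + 1) = τ (i + 1) := if_pos h1
        rw [e1, h2]; exact hτstep i hlt
      · have hlt : i < m := by omega
        have e1 : π i = τ i := if_pos hlt
        have h2 : π (i + 1) = (F (i + 1 - m)).1 := if_neg (by omega)
        have h3 : i + 1 - m = 0 := by omega
        rw [e1, h2, h3, hF0, ← hτm, ← h1]
        exact hτstep i hlt
      · have h0 : m ≤ i := by omega
        rw [hπge i h0, hπge (i + 1) (by omega)]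
        have : i + 1 - m = (i - m) + 1 := by omega
        rw [this]; exact hFstep (i - m)
  have hinf := hall π hrun
  have hsub : {i : ℕ | π i ∈ B} ⊆ Set.Iio m := by
    intro i hi
    by_contra hge
    simp only [Set.mem_Iio, not_lt] at hge
    exact hFavoid (i - m) (by rwa [← hπge i hge])
  exact hinf ((Set.finite_Iio m).subset hsub)
end

section
/- Sufficiency of memoryless schedulers for existential Büchi analysis (Appendix lemma): Let S be a type of states with a total transition relation R (every state has at least one R-successor), a set Init ⊆ S of initial states, and a Büchi specification B ⊆ S. Then there exists a run π : ℕ → S (π 0 ∈ Init, R (π i) (π (i+1)) for all i) with {i : ℕ | π i ∈ B} infinite if and only if there exist a function σ : S → S with R s (σ s) for all s and a state s₀ ∈ Init such that the orbit n ↦ σ^[n] s₀ satisfies that {n : ℕ | σ^[n] s₀ ∈ B} is infinite. -/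
/-- Sufficiency of memoryless schedulers for existential Büchi analysis. -/
theorem memoryless_sufficient_existential {S : Type*} (R : S → S → Prop)
    (Init B : Set S) (htotal : ∀ s, ∃ s', R s s') :
    (∃ π : ℕ → S, IsRun R Init π ∧ {i : ℕ | π i ∈ B}.Infinite) ↔
      (∃ σ : S → S, (∀ s, R s (σ s)) ∧
        ∃ s₀ ∈ Init, {n : ℕ | σ^[n] s₀ ∈ B}.Infinite) := by
  classical
  constructor
  · rintro ⟨π, ⟨h0, hstep⟩, hinf⟩
    -- for every index there is a later (or equal) index in B
    have hnb : ∀ i : ℕ, ∃ j, i ≤ j ∧ π j ∈ B := by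
      intro i
      obtain ⟨j, hjB, hij⟩ := hinf.exists_gt i
      exact ⟨j, hij.le, hjB⟩
    -- next-B time and waiting time
    set nb : ℕ → ℕ := fun i => Nat.find (hnb i) with hnbdef
    have hnb_le : ∀ i, i ≤ nb i := fun i => (Nat.find_spec (hnb i)).1
    have hnb_mem : ∀ i, π (nb i) ∈ B := fun i => (Nat.find_spec (hnb i)).2
    set wt : ℕ → ℕ := fun i => nb i - i with hwtdef
    -- for each state occurring in π, pick an occurrence of minimal waiting time
    have key : ∀ s, (∃ i, π i = s) → ∃ i, π i = s ∧ ∀ j, π j = s → wt i ≤ wt j := by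
      intro s hs
      have hm : ∃ m, ∃ i, π i = s ∧ wt i = m :=
        ⟨wt hs.choose, hs.choose, hs.choose_spec, rfl⟩
      obtain ⟨i, hi, hwi⟩ := Nat.find_spec hm
      refine ⟨i, hi, fun j hj => ?_⟩
      rw [hwi]
      exact Nat.find_le ⟨j, hj, rfl⟩
    set σ : S → S :=
      fun s => if h : ∃ i, π i = s then π ((key s h).choose + 1) else (htotal s).choose
      with hσdef
    have hσ_occ : ∀ s (h : ∃ i, π i = s), σ s = π ((key s h).choose + 1) := by
      intro s h
      simp only [hσdef, dif_pos h]
    have hR : ∀ s, R s (σ s) := by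
      intro s
      by_cases h : ∃ i, π i = s
      · rw [hσ_occ s h]
        have := (key s h).choose_spec.1
        conv_lhs => rw [← this]
        exact hstep _
      · simp only [hσdef, dif_neg h]
        exact (htotal s).choose_spec
    -- measure
    set M : S → ℕ := fun s => if h : ∃ i, π i = s then wt (key s h).choose else 0
      with hMdef
    have hM_le : ∀ s (h : ∃ i, π i = s) (j : ℕ), π j = s → M s ≤ wt j := by
      intro s h j hj
      simp only [hMdef, dif_pos h]
      exact (key s h).choose_spec.2 j hj
    have hM_eq : ∀ s (h : ∃ i, π i = s), M s = wt (key s h).choose := by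
      intro s h
      simp only [hMdef, dif_pos h]
    have hM0 : ∀ s (h : ∃ i, π i = s), M s = 0 → s ∈ B := by
      intro s h hM
      have hw : wt (key s h).choose = 0 := by rw [← hM_eq s h, hM]
      have hle : nb (key s h).choose ≤ (key s h).choose := by
        have := Nat.sub_eq_zero_iff_le.mp hw
        exact this
      have heq : nb (key s h).choose = (key s h).choose :=
        le_antisymm hle (hnb_le _)
      have := hnb_mem (key s h).choose
      rw [heq, (key s h).choose_spec.1] at this
      exact this
    have hMdec : ∀ s (h : ∃ i, π i = s), 0 < M s → M (σ s) < M s := by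
      intro s h hpos
      set i := (key s h).choose with hidef
      have hwi : M s = wt i := hM_eq s h
      have hipos : i < nb i := by
        rcases lt_or_eq_of_le (hnb_le i) with h' | h'
        · exact h'
        · exfalso
          have : wt i = 0 := by simp [hwtdef, ← h']
          rw [hwi, this] at hpos; exact lt_irrefl 0 hpos
      -- nb (i+1) ≤ nb i
      have hnbs : nb (i + 1) ≤ nb i := Nat.find_le ⟨hipos, hnb_mem i⟩
      have hwt_succ : wt (i + 1) < wt i := by
        have h1 : nb (i + 1) - (i + 1) ≤ nb i - (i + 1) := Nat.sub_le_sub_right hnbs _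
        have h2 : nb i - (i + 1) < nb i - i := by
          apply Nat.sub_lt_sub_left hipos
          exact Nat.lt_succ_self i
        exact lt_of_le_of_lt h1 h2
      have hσs : σ s = π (i + 1) := hσ_occ s h
      have hMs : M (σ s) ≤ wt (i + 1) :=
        hM_le (σ s) ⟨i + 1, hσs.symm⟩ (i + 1) hσs.symm
      calc M (σ s) ≤ wt (i + 1) := hMs
        _ < wt i := hwt_succ
        _ = M s := hwi.symm
    -- the orbit
    set x : ℕ → S := fun n => σ^[n] (π 0) with hxdef
    have hx_succ : ∀ n, x (n + 1) = σ (x n) := by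
      intro n
      simp [hxdef, Function.iterate_succ_apply']
    have hxocc : ∀ n, ∃ i, π i = x n := by
      intro n
      induction n with
      | zero => exact ⟨0, rfl⟩
      | succ n ih =>
        rw [hx_succ n, hσ_occ (x n) ih]
        exact ⟨(key (x n) ih).choose + 1, rfl⟩
    have hreach : ∀ m n, M (x n) = m → ∃ k, n ≤ k ∧ x k ∈ B := by
      intro m
      induction m using Nat.strong_induction_on with
      | _ m ih =>
        intro n hm
        rcases Nat.eq_zero_or_pos m with hz | hpos
        · exact ⟨n, le_rfl, hM0 (x n) (hxocc n) (by rw [hm, hz])⟩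
        · have hdec : M (x (n + 1)) < m := by
            rw [hx_succ n, ← hm]
            exact hMdec (x n) (hxocc n) (hm ▸ hpos)
          obtain ⟨k, hk, hkB⟩ := ih (M (x (n + 1))) hdec (n + 1) rfl
          exact ⟨k, le_trans (Nat.le_succ n) hk, hkB⟩
    refine ⟨σ, hR, π 0, h0, ?_⟩
    apply Set.infinite_of_not_bddAbove
    rintro ⟨b, hb⟩
    obtain ⟨k, hk, hkB⟩ := hreach (M (x (b + 1))) (b + 1) rfl
    have : k ≤ b := hb hkB
    omega
  · rintro ⟨σ, hR, s₀, hs₀, hinf⟩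
    refine ⟨fun n => σ^[n] s₀, ⟨by simpa using hs₀, fun i => ?_⟩, hinf⟩
    simpa [Function.iterate_succ_apply'] using hR (σ^[i] s₀)
end

section
/- Sufficiency of memoryless schedulers for universal Büchi analysis (Appendix lemma): Let S be a type of states with a total transition relation R (every state has at least one R-successor), a set Init ⊆ S of initial states, and a Büchi specification B ⊆ S. Then the following are equivalent: (1) for every function σ : S → S with R s (σ s) for all s and every s₀ ∈ Init, the set {n : ℕ | σ^[n] s₀ ∈ B} is infinite; (2) for every run π : ℕ → S (π 0 ∈ Init, R (π i) (π (i+1)) for all i), the set {i : ℕ | π i ∈ B} is infinite. -/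
/-- Sufficiency of memoryless schedulers for universal Büchi analysis. -/
theorem memoryless_sufficient_universal {S : Type*} (R : S → S → Prop)
    (Init B : Set S) (htotal : ∀ s, ∃ s', R s s') :
    (∀ σ : S → S, (∀ s, R s (σ s)) →
        ∀ s₀ ∈ Init, {n : ℕ | σ^[n] s₀ ∈ B}.Infinite) ↔
      (∀ π : ℕ → S, IsRun R Init π → {i : ℕ | π i ∈ B}.Infinite) := by
  classical
  constructor
  · intro h π hπ
    by_contra hfin
    rw [Set.not_infinite] at hfin
    obtain ⟨M, hM⟩ := hfin.bddAbove
    set N := M + 1 with hNdef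
    have hNB : ∀ i, N ≤ i → π i ∉ B := by
      intro i hi hB
      have := hM (Set.mem_setOf.mpr hB)
      omega
    set T : Set S := {s | ∃ i, N ≤ i ∧ π i = s} with hTdef
    set σ : S → S := fun s =>
      if h1 : ∃ i, N ≤ i ∧ π i = s then π (Nat.find h1 + 1)
      else if h2 : ∃ i, π i = s then
        π (Nat.findGreatest (fun i => π i = s) N + 1)
      else Classical.choose (htotal s) with hσdef
    have hσR : ∀ s, R s (σ s) := by
      intro s
      rw [hσdef]
      by_cases h1 : ∃ i, N ≤ i ∧ π i = s
      · simp only [dif_pos h1]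
        have hs := (Nat.find_spec h1).2
        have h3 := hπ.2 (Nat.find h1)
        rw [hs] at h3
        exact h3
      · simp only [dif_neg h1]
        by_cases h2 : ∃ i, π i = s
        · simp only [dif_pos h2]
          obtain ⟨i, hi⟩ := h2
          have hiN : i ≤ N := by
            by_contra hc
            exact h1 ⟨i, by omega, hi⟩
          have hg : π (Nat.findGreatest (fun i => π i = s) N) = s :=
            Nat.findGreatest_spec (P := fun i => π i = s) hiN hi
          have h3 := hπ.2 (Nat.findGreatest (fun i => π i = s) N)
          rw [hg] at h3
          exact h3
        · simp only [dif_neg h2]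
          exact Classical.choose_spec (htotal s)
    have hTinv : ∀ s ∈ T, σ s ∈ T := by
      intro s hs
      have h1 : ∃ i, N ≤ i ∧ π i = s := hs
      have : σ s = π (Nat.find h1 + 1) := by rw [hσdef]; simp [dif_pos h1]
      rw [this]
      exact ⟨Nat.find h1 + 1, by have := (Nat.find_spec h1).1; omega, rfl⟩
    have hTnotB : ∀ s ∈ T, s ∉ B := by
      rintro s ⟨i, hi, rfl⟩
      exact hNB i hi
    -- reachability of T along the scheduler run
    have hQ : ∀ n, n ≤ N →
        σ^[n] (π 0) ∈ T ∨ ∃ j, n ≤ j ∧ j ≤ N ∧ σ^[n] (π 0) = π j := by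
      intro n hn
      induction n with
      | zero => exact Or.inr ⟨0, le_refl _, Nat.zero_le _, rfl⟩
      | succ m ih =>
        rcases ih (by omega) with hT | ⟨j, hmj, hjN, heq⟩
        · left
          rw [Function.iterate_succ_apply']
          exact hTinv _ hT
        · by_cases hT : σ^[m] (π 0) ∈ T
          · left
            rw [Function.iterate_succ_apply']
            exact hTinv _ hT
          · -- j < N, and σ step moves to a later prefix index
            have hjN' : j < N := by
              rcases Nat.lt_or_ge j N with h | h
              · exact h
              · exact absurd ⟨j, h, heq.symm⟩ hT
            have h1 : ¬ ∃ i, N ≤ i ∧ π i = σ^[m] (π 0) := hT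
            have h2 : ∃ i, π i = σ^[m] (π 0) := ⟨j, heq.symm⟩
            set s := σ^[m] (π 0) with hs
            have hσs : σ s = π (Nat.findGreatest (fun i => π i = s) N + 1) := by
              rw [hσdef]; simp [dif_neg h1, dif_pos h2]
            set g := Nat.findGreatest (fun i => π i = s) N with hg
            have hjg : j ≤ g := Nat.le_findGreatest hjN'.le heq.symm
            have hgN : g ≤ N := Nat.findGreatest_le N
            have hgspec : π g = s :=
              Nat.findGreatest_spec (P := fun i => π i = s) hjN'.le heq.symm
            have hgN' : g < N := by
              rcases Nat.lt_or_ge g N with h | h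
              · exact h
              · exact absurd ⟨g, h, hgspec⟩ hT
            right
            refine ⟨g + 1, by omega, by omega, ?_⟩
            rw [Function.iterate_succ_apply', ← hs, hσs]
    have hreach : σ^[N] (π 0) ∈ T := by
      rcases hQ N le_rfl with hT | ⟨j, hNj, hjN, heq⟩
      · exact hT
      · have hjN' : j = N := le_antisymm hjN hNj
        rw [heq, hjN']
        exact ⟨N, le_rfl, rfl⟩
    have hall : ∀ n, N ≤ n → σ^[n] (π 0) ∈ T := by
      intro n hn
      induction n, hn using Nat.le_induction with
      | base => exact hreach
      | succ m hm ih =>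
        rw [Function.iterate_succ_apply']
        exact hTinv _ ih
    have hinf := h σ hσR (π 0) hπ.1
    have hfin2 : {n : ℕ | σ^[n] (π 0) ∈ B}.Finite := by
      apply (Set.finite_Iio N).subset
      intro n hn
      by_contra hc
      simp only [Set.mem_Iio, not_lt] at hc
      exact hTnotB _ (hall n hc) hn
    exact hinf hfin2
  · intro h σ hσ s₀ hs₀
    refine h (fun n => σ^[n] s₀) ⟨by simpa using hs₀, fun i => ?_⟩
    simp only [Function.iterate_succ_apply']
    exact hσ _
end

section
/- Persistence of non-negativity and eventual return used in the soundness proofs: Let S be a type of states, B ⊆ S, f : S → ℝ, and π : ℕ → S a sequence such that for every i the pair (π i, π (i+1)) is Büchi-ranked by f, namely: if π i ∈ B then (f (π i) ≥ 0 → f (π (i+1)) ≥ 0), and if π i ∉ B then (f (π i) ≥ 0 → (0 ≤ f (π (i+1)) ∧ f (π (i+1)) ≤ f (π i) - 1)). If f (π 0) ≥ 0, then (a) f (π i) ≥ 0 for every i : ℕ, and (b) for every k : ℕ there exists j ≥ k with π j ∈ B. -/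
/-- Persistence of non-negativity and eventual return: along a sequence all of
whose steps are Büchi-ranked by `f`, if `f` is non-negative initially then it
stays non-negative and `B` is visited again after every index. -/
theorem persistence_and_eventual_return {S : Type*} (B : Set S) (f : S → ℝ)
    (π : ℕ → S)
    (hrank : ∀ i : ℕ,
      (π i ∈ B → (f (π i) ≥ 0 → f (π (i + 1)) ≥ 0)) ∧
      (π i ∉ B → (f (π i) ≥ 0 → 0 ≤ f (π (i + 1)) ∧ f (π (i + 1)) ≤ f (π i) - 1)))
    (h0 : f (π 0) ≥ 0) :
    (∀ i : ℕ, f (π i) ≥ 0) ∧ (∀ k : ℕ, ∃ j ≥ k, π j ∈ B) := by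
  have ha : ∀ i : ℕ, f (π i) ≥ 0 := by
    intro i
    induction i with
    | zero => exact h0
    | succ n ih =>
      by_cases hb : π n ∈ B
      · exact (hrank n).1 hb ih
      · exact ((hrank n).2 hb ih).1
  refine ⟨ha, fun k => ?_⟩
  by_contra h
  push_neg at h
  have hdec : ∀ n : ℕ, f (π (k + n)) ≤ f (π k) - n := by
    intro n
    induction n with
    | zero => simp
    | succ m ih =>
      have hb : π (k + m) ∉ B := h (k + m) (Nat.le_add_right k m)
      have := ((hrank (k + m)).2 hb (ha (k + m))).2
      push_cast
      calc f (π (k + (m + 1))) = f (π (k + m + 1)) := by ring_nf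
        _ ≤ f (π (k + m)) - 1 := this
        _ ≤ f (π k) - m - 1 := by linarith
        _ = f (π k) - (m + 1) := by ring
  obtain ⟨n, hn⟩ := exists_nat_gt (f (π k))
  have := hdec n
  have := ha (k + n)
  linarith
end

section
/- Lasso construction from a cycle through B (case (iii) of the memoryless scheduler lemma): Let S be a type of states with a transition relation R and initial states Init ⊆ S, and let B ⊆ S be a Büchi specification. Suppose π : ℕ → S is a run (π 0 ∈ Init, R (π i) (π (i+1)) for all i) and there exist indices b < j with π b = π j and π k ∈ B for some b ≤ k < j. Then there exists a run π' : ℕ → S that is eventually periodic (there exist m and a period p > 0 with π' (n + p) = π' n for all n ≥ m), satisfies π' i = π' i' → π' (i+1) = π' (i'+1) for all i, i' (i.e., the successor chosen at each state depends only on that state), and visits B infinitely often, i.e., {i : ℕ | π' i ∈ B} is infinite. -/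
namespace LassoAux

/-- Index wrapping for the lasso: identity below `j`, then cycles over `[b, j)`. -/
def widx (b j n : ℕ) : ℕ := if n < j then n else b + (n - b) % (j - b)

lemma widx_lt {b j : ℕ} (hbj : b < j) (n : ℕ) : widx b j n < j := by
  unfold widx; split
  · assumption
  · have hp : 0 < j - b := by omega
    have := Nat.mod_lt (n - b) hp
    omega

lemma widx_id (b j n : ℕ) (h : n < j) : widx b j n = n := if_pos h

lemma widx_widx {b j : ℕ} (hbj : b < j) (n : ℕ) : widx b j (widx b j n) = widx b j n :=
  widx_id _ _ _ (widx_lt hbj n)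

lemma widx_step {S : Type*} {R : S → S → Prop} {π : ℕ → S}
    (hR : ∀ i, R (π i) (π (i + 1))) {b j : ℕ} (hbj : b < j) (hcyc : π b = π j)
    (m : ℕ) : R (π (widx b j m)) (π (widx b j (m + 1))) := by
  set p := j - b with hpdef
  have hp : 0 < p := by omega
  by_cases h1 : m + 1 < j
  · rw [widx_id b j m (by omega), widx_id b j (m + 1) h1]
    exact hR m
  by_cases h2 : m + 1 = j
  · rw [widx_id b j m (by omega)]
    have hw : widx b j (m + 1) = b := by
      unfold widx; rw [if_neg (by omega)]
      have h3 : m + 1 - b = p := by omega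
      rw [h3, Nat.mod_self]
      omega
    rw [hw, hcyc, ← h2]

    exact hR m
  · -- m ≥ j
    have hm : ¬ m < j := by omega
    have hm1 : ¬ m + 1 < j := by omega
    set d := m - b with hddef
    set r := d % p with hrdef
    have hr : r < p := Nat.mod_lt _ hp
    have hwm : widx b j m = b + r := by unfold widx; rw [if_neg hm]
    have hd1 : m + 1 - b = d + 1 := by omega
    by_cases hr1 : r + 1 < p
    · have hmod : (d + 1) % p = r + 1 := by
        have hp2 : 1 < p := by omega
        rw [Nat.add_mod, Nat.mod_eq_of_lt hp2, ← hrdef, Nat.mod_eq_of_lt hr1]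
      have hw1 : widx b j (m + 1) = b + r + 1 := by
        unfold widx; rw [if_neg hm1, hd1, hmod]; omega
      rw [hwm, hw1]
      exact hR (b + r)
    · -- r + 1 = p : wrap around
      have hrp : r + 1 = p := by omega
      have hdiv := Nat.div_add_mod d p
      have h2' : d + 1 = p * (d / p + 1) := by rw [Nat.mul_succ]; omega
      have hmod : (d + 1) % p = 0 := by rw [h2']; exact Nat.mul_mod_right p _
      have hw1 : widx b j (m + 1) = b := by
        unfold widx; rw [if_neg hm1, hd1, hmod]
        omega
      rw [hwm, hw1, hcyc]
      have := hR (b + r)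
      have hbr : b + r + 1 = j := by omega
      rwa [hbr] at this

open Classical in
/-- The largest occurrence index `≤ N` of state `s` along the wrapped run. -/
noncomputable def canonIdx {S : Type*} (π : ℕ → S) (b j N : ℕ) (s : S) : ℕ :=
  Nat.findGreatest (fun m => π (widx b j m) = s) N

open Classical in
lemma le_canonIdx {S : Type*} (π : ℕ → S) (b j N : ℕ) {m : ℕ} {s : S}
    (h1 : m ≤ N) (h2 : π (widx b j m) = s) : m ≤ canonIdx π b j N s :=
  Nat.le_findGreatest h1 h2

open Classical in
lemma canonIdx_spec {S : Type*} (π : ℕ → S) (b j N : ℕ) {m : ℕ} {s : S}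
    (h1 : m ≤ N) (h2 : π (widx b j m) = s) :
    π (widx b j (canonIdx π b j N s)) = s := by
  unfold canonIdx
  exact Nat.findGreatest_spec (P := fun m => π (widx b j m) = s) h1 h2

open Classical in
lemma canonIdx_le {S : Type*} (π : ℕ → S) (b j N : ℕ) (s : S) :
    canonIdx π b j N s ≤ N :=
  Nat.findGreatest_le N

open Classical in
/-- The memoryless successor function. -/
noncomputable def nextFun {S : Type*} (π : ℕ → S) (b j N : ℕ) (s : S) : S :=
  π (widx b j (canonIdx π b j N s + 1))

end LassoAux

open LassoAux in
/-- Lasso construction from a cycle through `B`: if a run contains a cycle that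
intersects `B`, then there is an eventually periodic run, with memoryless
successor choices, that visits `B` infinitely often. -/
theorem lasso_from_cycle_through_B {S : Type*} (R : S → S → Prop)
    (Init B : Set S) (π : ℕ → S) (hπ : IsRun R Init π)
    (b j : ℕ) (hbj : b < j) (hcycle : π b = π j)
    (hB : ∃ k, b ≤ k ∧ k < j ∧ π k ∈ B) :
    ∃ π' : ℕ → S, IsRun R Init π' ∧
      (∃ m : ℕ, ∃ p : ℕ, 0 < p ∧ ∀ n ≥ m, π' (n + p) = π' n) ∧
      (∀ i i' : ℕ, π' i = π' i' → π' (i + 1) = π' (i' + 1)) ∧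
      {i : ℕ | π' i ∈ B}.Infinite := by
  classical
  obtain ⟨k, hbk, hkj, hkB⟩ := hB
  obtain ⟨hInit, hR⟩ := hπ
  set p : ℕ := j - b with hpdef
  have hp : 0 < p := by omega
  set N : ℕ := k + p with hNdef
  have hjN : j ≤ N := by omega
  -- the wrapped (lasso) run
  set ρ : ℕ → S := fun n => π (widx b j n) with hρdef
  have hρstep : ∀ m, R (ρ m) (ρ (m + 1)) := fun m => widx_step hR hbj hcycle m
  have hρocc : ∀ m, widx b j m ≤ N ∧ ρ (widx b j m) = ρ m := by
    intro m
    refine ⟨by have := widx_lt hbj m; omega, ?_⟩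
    simp only [hρdef]
    rw [widx_widx hbj]
  have hρN : ρ N = π k := by
    simp only [hρdef]
    have h1 : ¬ N < j := by omega
    have h2 : widx b j N = k := by
      unfold widx
      rw [if_neg h1]
      have h3 : N - b = (k - b) + p := by omega
      rw [h3, Nat.add_mod_right, Nat.mod_eq_of_lt (by omega)]
      omega
    rw [h2]
  set L : S → ℕ := canonIdx π b j N with hLdef
  set f : S → S := nextFun π b j N with hfdef
  have hfL : ∀ s, f s = ρ (L s + 1) := fun s => rfl
  set π' : ℕ → S := fun n => f^[n] (π 0) with hπ'def
  have hπ'succ : ∀ n, π' (n + 1) = f (π' n) := by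
    intro n
    simp only [hπ'def, Function.iterate_succ_apply']
  -- every value of π' is a value of ρ
  have hval : ∀ n, ∃ m, π' n = ρ m := by
    intro n
    induction n with
    | zero =>
      refine ⟨0, ?_⟩
      simp only [hπ'def, Function.iterate_zero_apply, hρdef, widx_id b j 0 (by omega)]
    | succ n ih =>
      exact ⟨L (π' n) + 1, by rw [hπ'succ, hfL]⟩
  -- canonical index property
  have hcanon : ∀ n, ρ (L (π' n)) = π' n := by
    intro n
    obtain ⟨m, hm⟩ := hval n
    rw [hm]
    obtain ⟨h1, h2⟩ := hρocc m
    exact canonIdx_spec π b j N h1 h2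
  have hLle : ∀ n, L (π' n) ≤ N := fun n => canonIdx_le π b j N _
  -- π' is a run
  have hrun : IsRun R Init π' := by
    refine ⟨?_, ?_⟩
    · simpa only [hπ'def, Function.iterate_zero_apply] using hInit
    · intro n
      rw [hπ'succ, hfL]
      conv_lhs => rw [← hcanon n]
      exact hρstep (L (π' n))
  -- index progress
  have hsucc_idx : ∀ n, π' (n + 1) = ρ (L (π' n) + 1) := by
    intro n; rw [hπ'succ, hfL]
  have hprog : ∀ n, L (π' n) < N → L (π' n) + 1 ≤ L (π' (n + 1)) := by
    intro n hn
    exact le_canonIdx π b j N (by omega) (hsucc_idx n).symm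
  have hatN : ∀ n, L (π' n) = N → π' n ∈ B := by
    intro n hn
    have := hcanon n
    rw [hn, hρN] at this
    rwa [← this]
  -- from any point, the canonical index reaches N
  have hreach : ∀ n, ∃ t, L (π' (n + t)) = N := by
    intro n
    have claim : ∀ t, (∃ s, L (π' (n + s)) = N) ∨ L (π' n) + t ≤ L (π' (n + t)) := by
      intro t
      induction t with
      | zero => right; simp
      | succ t ih =>
        rcases ih with h | h
        · left; exact h
        · by_cases heq : L (π' (n + t)) = N
          · left; exact ⟨t, heq⟩
          · right
            have hlt : L (π' (n + t)) < N := lt_of_le_of_ne (hLle _) heq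
            have := hprog (n + t) hlt
            have hrw : n + t + 1 = n + (t + 1) := by omega
            rw [hrw] at this
            omega
    rcases claim (N + 1) with h | h
    · exact h
    · exfalso
      have := hLle (n + (N + 1))
      omega
  -- B is visited infinitely often
  have hBinf : {i : ℕ | π' i ∈ B}.Infinite := by
    apply Set.infinite_of_forall_exists_gt
    intro n
    obtain ⟨t, ht⟩ := hreach (n + 1)
    refine ⟨n + 1 + t, ?_, by omega⟩
    exact hatN _ ht
  -- eventual periodicity
  obtain ⟨t1, ht1⟩ := hreach 0
  obtain ⟨t2, ht2⟩ := hreach (t1 + 1)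
  set n1 : ℕ := 0 + t1 with hn1def
  set n2 : ℕ := t1 + 1 + t2 with hn2def
  have hn1n2 : n1 < n2 := by omega
  have heq : π' n1 = π' n2 := by
    rw [← hcanon n1, ← hcanon n2, ht1, ht2]
  set q : ℕ := n2 - n1 with hqdef
  have hq : 0 < q := by omega
  have hper : ∀ n ≥ n1, π' (n + q) = π' n := by
    have aux : ∀ t, π' (n1 + t + q) = π' (n1 + t) := by
      intro t
      induction t with
      | zero =>
        have : n1 + 0 + q = n2 := by omega
        rw [this]
        simpa using heq.symm
      | succ t ih =>
        have h1 : n1 + (t + 1) + q = (n1 + t + q) + 1 := by omega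
        have h2 : n1 + (t + 1) = (n1 + t) + 1 := by omega
        rw [h1, h2, hπ'succ, hπ'succ, ih]
    intro n hn
    obtain ⟨t, rfl⟩ := Nat.exists_eq_add_of_le hn
    exact aux t
  refine ⟨π', hrun, ⟨n1, q, hq, hper⟩, ?_, hBinf⟩
  intro i i' h
  rw [hπ'succ, hπ'succ, h]
end
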